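/- The matrices X± = ikJ + iQ± and T± = 4iσk³J − iq₀²J + k²(4iσQ± + 2iJ) + k(2iQ± − 2iσJ Q±²) − 2iσQ±³ − iJQ±² commute: [X±, T±] = 0. -/
import Mathlib

open Matrix Complex

set_option maxHeartbeats 1000000 in
/-- The asymptotic Lax matrices `X± = ikJ + iQ±` and
`T± = 4iσk³J − iq₀²J + k²(4iσQ± + 2iJ) + k(2iQ± − 2iσJQ±²) − 2iσQ±³ − iJQ±²`
commute: `[X±, T±] = 0`. -/
theorem stmt9 (q₀ : ℝ) (hq₀ : 0 < q₀) (σ : ℝ) (k : ℂ) (q₁ q₂ : ℂ)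
    (hn : (starRingEnd ℂ) q₁ * q₁ + (starRingEnd ℂ) q₂ * q₂ = (q₀ : ℂ)^2) :
    let J : Matrix (Fin 3) (Fin 3) ℂ := !![1,0,0; 0,-1,0; 0,0,-1]
    let Q : Matrix (Fin 3) (Fin 3) ℂ :=
      !![0, -(starRingEnd ℂ) q₁, -(starRingEnd ℂ) q₂; q₁, 0, 0; q₂, 0, 0]
    let X : Matrix (Fin 3) (Fin 3) ℂ := (Complex.I * k) • J + Complex.I • Q
    let T : Matrix (Fin 3) (Fin 3) ℂ :=
      (4 * Complex.I * (σ:ℂ) * k^3) • J - (Complex.I * (q₀:ℂ)^2) • J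
        + (4 * Complex.I * (σ:ℂ) * k^2) • Q + (2 * Complex.I * k^2) • J
        + (2 * Complex.I * k) • Q - (2 * Complex.I * (σ:ℂ) * k) • (J * Q^2)
        - (2 * Complex.I * (σ:ℂ)) • Q^3 - Complex.I • (J * Q^2)
    X * T = T * X := by
  intro J Q X T
  have hQ2 : Q^2 = !![-((starRingEnd ℂ) q₁ * q₁ + (starRingEnd ℂ) q₂ * q₂), 0, 0;
      0, -(q₁ * (starRingEnd ℂ) q₁), -(q₁ * (starRingEnd ℂ) q₂);
      0, -(q₂ * (starRingEnd ℂ) q₁), -(q₂ * (starRingEnd ℂ) q₂)] := by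
    rw [pow_two]
    ext i j
    fin_cases i <;> fin_cases j <;>
      simp [Q, Matrix.mul_apply, Fin.sum_univ_three, Matrix.vecHead, Matrix.vecTail] <;> ring
  have hQ3 : Q^3 = (-((starRingEnd ℂ) q₁ * q₁ + (starRingEnd ℂ) q₂ * q₂)) • Q := by
    rw [pow_succ, hQ2]
    ext i j
    fin_cases i <;> fin_cases j <;>
      simp [Q, Matrix.mul_apply, Fin.sum_univ_three, Matrix.vecHead, Matrix.vecTail] <;> ring
  have hJ2 : J * Q^2 = !![-((starRingEnd ℂ) q₁ * q₁ + (starRingEnd ℂ) q₂ * q₂), 0, 0;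
      0, q₁ * (starRingEnd ℂ) q₁, q₁ * (starRingEnd ℂ) q₂;
      0, q₂ * (starRingEnd ℂ) q₁, q₂ * (starRingEnd ℂ) q₂] := by
    rw [hQ2]
    ext i j
    fin_cases i <;> fin_cases j <;>
      simp [J, Matrix.mul_apply, Fin.sum_univ_three, Matrix.vecHead, Matrix.vecTail] <;> ring
  show X * T = T * X
  simp only [X, T, hQ3, hJ2]
  ext i j
  fin_cases i <;> fin_cases j <;>
    simp [J, Q, Matrix.mul_apply, Fin.sum_univ_three, Matrix.vecHead, Matrix.vecTail,
      Matrix.add_apply, Matrix.sub_apply, Matrix.smul_apply, smul_eq_mul] <;>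
    (try rw [← hn]) <;> ring
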